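/- (Proposition 1) Let f be a ReLU network as defined and let the input x be a Gaussian-mixture random vector with law μ = Σ_{k=1}^K α_k N(μ_k, Σ_k). Fix a binary vector ζ' ∈ {0,1}^N and set μ̃_{k,ζ'} = C̄^{(L-1)} μ_k + d̄^{(L-1)} and Σ̃_{k,ζ'} = C̄^{(L-1)} Σ_k (C̄^{(L-1)})ᵀ. If Σ̃_{k,ζ'} is invertible for all k, then the probability that the activation pattern equals ζ' is the mixture of Gaussian orthant probabilities: P(ζ(x) = ζ') = Σ_{k=1}^K α_k · N(μ̃_{k,ζ'}, Σ̃_{k,ζ'})(O(ζ')). -/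

import Mathlib

/-! On the event that the input has activation pattern `ζ'`, the ReLU of hidden layer `ℓ` acts as
`diag(z_ℓ)`, so by induction on the layers the pre-activations are `C_ℓ x + d_ℓ`; hence the event
is exactly `{C̄ x + d̄ ∈ O(ζ')}`. Under the mixture component `N(μ_k, Σ_k)` the affine image
`C̄ x + d̄` is again Gaussian, with mean `C̄ μ_k + d̄` and covariance `C̄ Σ_k C̄ᵀ`, since Gaussian
measures are determined by these two moments. Summing over the components gives the formula. -/

open Matrix MeasureTheory ProbabilityTheory

namespace ReluPaper

variable {n : ℕ → ℕ}

/-- Hidden representations of the ReLU network: `hid W b x ℓ` is the paper's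
`h_{ℓ+1}(x)`, so that for a network with `L = M + 1` layers the output is
`f(x) = h_L(x) = hid W b x M`. -/
noncomputable def hid (W : ∀ ℓ : ℕ, Matrix (Fin (n (ℓ + 1))) (Fin (n ℓ)) ℝ)
    (b : ∀ ℓ : ℕ, Fin (n (ℓ + 1)) → ℝ) (x : Fin (n 0) → ℝ) :
    ∀ ℓ : ℕ, Fin (n (ℓ + 1)) → ℝ
  | 0 => W 0 *ᵥ x + b 0
  | ℓ + 1 => W (ℓ + 1) *ᵥ (fun i => max 0 (hid W b x ℓ i)) + b (ℓ + 1)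

/-- The matrices `C_ℓ` of the paper (0-indexed: `Cmat W z ℓ` is the paper's `C_{ℓ+1}`),
built from an activation pattern `z` via `C₁ = W₁`, `C_ℓ = W_ℓ diag(z_{ℓ-1}) C_{ℓ-1}`. -/
noncomputable def Cmat (W : ∀ ℓ : ℕ, Matrix (Fin (n (ℓ + 1))) (Fin (n ℓ)) ℝ)
    (z : ∀ ℓ : ℕ, Fin (n (ℓ + 1)) → ℝ) :
    ∀ ℓ : ℕ, Matrix (Fin (n (ℓ + 1))) (Fin (n 0)) ℝ
  | 0 => W 0
  | ℓ + 1 => W (ℓ + 1) * Matrix.diagonal (z ℓ) * Cmat W z ℓ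

/-- The vectors `d_ℓ` of the paper (0-indexed: `dvec W b z ℓ` is the paper's `d_{ℓ+1}`),
via `d₁ = b₁`, `d_ℓ = W_ℓ diag(z_{ℓ-1}) d_{ℓ-1} + b_ℓ`. -/
noncomputable def dvec (W : ∀ ℓ : ℕ, Matrix (Fin (n (ℓ + 1))) (Fin (n ℓ)) ℝ)
    (b : ∀ ℓ : ℕ, Fin (n (ℓ + 1)) → ℝ) (z : ∀ ℓ : ℕ, Fin (n (ℓ + 1)) → ℝ) :
    ∀ ℓ : ℕ, Fin (n (ℓ + 1)) → ℝ
  | 0 => b 0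
  | ℓ + 1 => W (ℓ + 1) *ᵥ (Matrix.diagonal (z ℓ) *ᵥ dvec W b z ℓ) + b (ℓ + 1)

/-- `x` induces activation pattern `z`, i.e. `𝟙(h_ℓ) = z_ℓ` for every hidden layer
`ℓ = 1, …, L - 1` of a network with `L = M + 1` layers. -/
def inducesPattern (M : ℕ) (W : ∀ ℓ : ℕ, Matrix (Fin (n (ℓ + 1))) (Fin (n ℓ)) ℝ)
    (b : ∀ ℓ : ℕ, Fin (n (ℓ + 1)) → ℝ) (x : Fin (n 0) → ℝ)
    (z : ∀ ℓ : ℕ, Fin (n (ℓ + 1)) → ℝ) : Prop :=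
  ∀ ℓ < M, ∀ i, (if 0 < hid W b x ℓ i then (1 : ℝ) else 0) = z ℓ i

/-- Index set for the stacked vector `[h₁ᵀ, …, h_{L-1}ᵀ]ᵀ` (with `L = M + 1`):
a hidden layer index together with a neuron index in that layer. -/
abbrev PatIdx (M : ℕ) (n : ℕ → ℕ) := (ℓ : Fin M) × Fin (n (ℓ.1 + 1))

/-- The multivariate (possibly degenerate) Gaussian distribution `N(m, S)` on `ι → ℝ`:
the pushforward of a standard Gaussian under the affine map `x ↦ m + √S x`
(with junk value `0` if `S` is not positive semidefinite, a case never used below). -/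
noncomputable def mvGaussian {ι : Type*} [Fintype ι] [DecidableEq ι]
    (m : ι → ℝ) (S : Matrix ι ι ℝ) : Measure (ι → ℝ) :=
  letI := Classical.propDecidable S.PosSemidef
  if hS : S.PosSemidef then
    Measure.map (fun x => m + ((hS.1.eigenvectorUnitary : Matrix ι ι ℝ) *
        Matrix.diagonal ((↑) ∘ (√·) ∘ hS.1.eigenvalues) *
        (star hS.1.eigenvectorUnitary : Matrix ι ι ℝ)) *ᵥ x) (Measure.pi fun _ : ι => gaussianReal 0 1)
  else 0

open WithLp
open scoped MatrixOrder

section Gaussian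

variable {ι κ : Type*} [Fintype ι] [Fintype κ]

lemma posSemidef_mul_mul_transpose {S : Matrix ι ι ℝ} (hS : S.PosSemidef) (C : Matrix κ ι ℝ) :
    (C * S * Cᵀ).PosSemidef := by
  simpa [conjTranspose_eq_transpose_of_trivial] using hS.mul_mul_conjTranspose_same C

variable [DecidableEq ι] [DecidableEq κ]

/-- The square root `U diag(√λ) U*` used in `mvGaussian` is `CFC.sqrt S`. -/
lemma mvGaussian_eq_map_multivariateGaussian (m : ι → ℝ) {S : Matrix ι ι ℝ} (hS : S.PosSemidef) :
    mvGaussian m S = (multivariateGaussian (toLp 2 m) S).map ofLp := by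
  have hsqrt : CFC.sqrt S = (hS.1.eigenvectorUnitary : Matrix ι ι ℝ) *
      diagonal ((↑) ∘ (√·) ∘ hS.1.eigenvalues) * (star hS.1.eigenvectorUnitary : Matrix ι ι ℝ) := by
    rw [CFC.sqrt_eq_cfc, cfc_nnreal_eq_real _ S, hS.1.cfc_eq, IsHermitian.cfc,
      Unitary.conjStarAlgAut_apply]
    congr
    funext t
    rcases le_total t 0 with h | h <;> simp [h, Real.sqrt_eq_zero'.2]
  rw [mvGaussian, dif_pos hS, multivariateGaussian, ← map_pi_eq_stdGaussian,
    Measure.map_map (by fun_prop) (by fun_prop), Measure.map_map (by fun_prop) (by fun_prop), hsqrt]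
  rfl

/-- Both sides are Gaussian, so it suffices to compare means and covariances. -/
lemma multivariateGaussian_map_const_add_toEuclideanLin (μ : EuclideanSpace ℝ ι)
    {S : Matrix ι ι ℝ} (hS : S.PosSemidef) (C : Matrix κ ι ℝ) (d : EuclideanSpace ℝ κ) :
    (multivariateGaussian μ S).map (fun x => d + toEuclideanLin C x) =
      multivariateGaussian (d + toEuclideanLin C μ) (C * S * Cᵀ) := by
  let L : EuclideanSpace ℝ ι →L[ℝ] EuclideanSpace ℝ κ := (toEuclideanLin C).toContinuousLinearMap
  change (multivariateGaussian μ S).map ((d + ·) ∘ L) = _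
  rw [← Measure.map_map (by fun_prop) (by fun_prop)]
  apply IsGaussian.ext
  · simp only [id]
    rw [integral_map (by fun_prop) (by fun_prop),
      integral_add (integrable_const _) IsGaussian.integrable_fun_id, integral_const,
      ContinuousLinearMap.integral_id_map IsGaussian.integrable_id,
      integral_id_multivariateGaussian, integral_id_multivariateGaussian, probReal_univ, one_smul]
    simp [L]
  · rw [covarianceBilin_map_const_add]
    ext u v
    rw [covarianceBilin_map IsGaussian.memLp_two_id, covarianceBilin_multivariateGaussian hS,
      covarianceBilin_multivariateGaussian (posSemidef_mul_mul_transpose hS C),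
      show L.adjoint = (toEuclideanLin Cᴴ).toContinuousLinearMap by
        rw [toEuclideanLin_conjTranspose_eq_adjoint]; rfl]
    simp only [LinearMap.coe_toContinuousLinearMap', toLpLin_apply,
      conjTranspose_eq_transpose_of_trivial]
    rw [← mulVec_mulVec, ← mulVec_mulVec, dotProduct_mulVec u, mulVec_transpose]

lemma mvGaussian_map_mulVec_add (m : ι → ℝ) {S : Matrix ι ι ℝ} (hS : S.PosSemidef)
    (C : Matrix κ ι ℝ) (d : κ → ℝ) :
    (mvGaussian m S).map (fun x => C *ᵥ x + d) = mvGaussian (C *ᵥ m + d) (C * S * Cᵀ) := by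
  rw [mvGaussian_eq_map_multivariateGaussian _ hS,
    mvGaussian_eq_map_multivariateGaussian _ (posSemidef_mul_mul_transpose hS C),
    Measure.map_map (by fun_prop) (by fun_prop),
    show toLp 2 (C *ᵥ m + d) = toLp 2 d + toEuclideanLin C (toLp 2 m) by simp [add_comm],
    ← multivariateGaussian_map_const_add_toEuclideanLin _ hS C (toLp 2 d),
    Measure.map_map (by fun_prop) (by fun_prop)]
  congr 1
  funext x
  simp [add_comm]

end Gaussian

def orthant {ι : Type*} (ζ : ι → ℝ) : Set (ι → ℝ) :=
  {v | ∀ i, (if 0 < v i then (1 : ℝ) else 0) = ζ i}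

lemma measurableSet_orthant {ι : Type*} [Countable ι] (ζ : ι → ℝ) :
    MeasurableSet (orthant ζ) := by
  simp only [orthant, Set.ofPred_forall]
  exact MeasurableSet.iInter fun i => measurableSet_eq_fun
    (Measurable.ite (measurableSet_lt measurable_const (measurable_pi_apply i)) measurable_const
      measurable_const) measurable_const

section Network

variable (W : ∀ ℓ : ℕ, Matrix (Fin (n (ℓ + 1))) (Fin (n ℓ)) ℝ)
  (b : ∀ ℓ : ℕ, Fin (n (ℓ + 1)) → ℝ) (z : ∀ ℓ : ℕ, Fin (n (ℓ + 1)) → ℝ)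

/-- Below layer `ℓ` each ReLU acts as the diagonal matrix `diagonal (z ℓ')`. -/
lemma hid_eq_Cmat_mulVec_add_dvec (x : Fin (n 0) → ℝ) : ∀ ℓ : ℕ,
    (∀ ℓ' < ℓ, ∀ i, (if 0 < hid W b x ℓ' i then (1 : ℝ) else 0) = z ℓ' i) →
      hid W b x ℓ = Cmat W z ℓ *ᵥ x + dvec W b z ℓ
  | 0, _ => rfl
  | ℓ + 1, h => by
    have relu : (fun i => max 0 (hid W b x ℓ i)) = diagonal (z ℓ) *ᵥ hid W b x ℓ := by
      funext i
      rw [mulVec_diagonal, ← h ℓ ℓ.lt_succ_self i]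
      split_ifs with hpos
      · simp [hpos.le]
      · simp [not_lt.1 hpos]
    rw [hid, relu, hid_eq_Cmat_mulVec_add_dvec x ℓ fun ℓ' hℓ' => h ℓ' (hℓ'.trans ℓ.lt_succ_self),
      Cmat, dvec]
    simp only [mulVec_add, ← mulVec_mulVec]
    abel

lemma inducesPattern_iff (M : ℕ) (x : Fin (n 0) → ℝ) :
    inducesPattern M W b x z ↔ ∀ ℓ < M, ∀ i,
      (if 0 < (Cmat W z ℓ *ᵥ x + dvec W b z ℓ) i then (1 : ℝ) else 0) = z ℓ i := by
  refine ⟨fun h ℓ hℓ i => ?_, fun h ℓ => ?_⟩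
  · rw [← hid_eq_Cmat_mulVec_add_dvec W b z x ℓ fun ℓ' hℓ' => h ℓ' (hℓ'.trans hℓ)]
    exact h ℓ hℓ i
  · induction ℓ using Nat.strong_induction_on with
    | _ ℓ ih =>
      intro hℓ i
      rw [hid_eq_Cmat_mulVec_add_dvec W b z x ℓ fun ℓ' hℓ' => ih ℓ' hℓ' (hℓ'.trans hℓ)]
      exact h ℓ hℓ i

lemma inducesPattern_iff_mulVec_add_mem_orthant (M : ℕ) (x : Fin (n 0) → ℝ)
    (Cbar : Matrix (PatIdx M n) (Fin (n 0)) ℝ)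
    (hCbar : ∀ (p : PatIdx M n) (j : Fin (n 0)), Cbar p j = Cmat W z (p.1 : ℕ) p.2 j)
    (dbar : PatIdx M n → ℝ) (hdbar : ∀ p : PatIdx M n, dbar p = dvec W b z (p.1 : ℕ) p.2) :
    inducesPattern M W b x z ↔
      Cbar *ᵥ x + dbar ∈ orthant fun p : PatIdx M n => z (p.1 : ℕ) p.2 := by
  have entry (p : PatIdx M n) :
      (Cbar *ᵥ x + dbar) p = (Cmat W z (p.1 : ℕ) *ᵥ x + dvec W b z (p.1 : ℕ)) p.2 := by
    simp [mulVec, dotProduct, hCbar, hdbar]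
  simp only [inducesPattern_iff, orthant, Set.mem_ofPred_eq, entry]
  exact ⟨fun h p => h p.1 p.1.isLt p.2, fun h ℓ hℓ i => h ⟨⟨ℓ, hℓ⟩, i⟩⟩

end Network

theorem statement8_general
    (n : ℕ → ℕ) (M : ℕ)  -- the network has `L = M + 1` layers
    (W : ∀ ℓ : ℕ, Matrix (Fin (n (ℓ + 1))) (Fin (n ℓ)) ℝ)
    (b : ∀ ℓ : ℕ, Fin (n (ℓ + 1)) → ℝ)
    (z : ∀ ℓ : ℕ, Fin (n (ℓ + 1)) → ℝ)
    (Kc : ℕ) (α : Fin Kc → ℝ)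
    (μmix : Fin Kc → Fin (n 0) → ℝ) (Smix : Fin Kc → Matrix (Fin (n 0)) (Fin (n 0)) ℝ)
    (hSpd : ∀ k, (Smix k).PosDef)
    {Ω : Type*} [MeasurableSpace Ω] (P : Measure Ω)
    (X : Ω → Fin (n 0) → ℝ) (hX : Measurable X)
    -- the input has Gaussian-mixture law `μ = ∑ k, α k • N(μ_k, Σ_k)`
    (hlaw : P.map X = ∑ k, ENNReal.ofReal (α k) • mvGaussian (μmix k) (Smix k))
    -- the stacked matrix `C̄^{(L-1)}` and stacked vector `d̄^{(L-1)}`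
    (Cbar : Matrix (PatIdx M n) (Fin (n 0)) ℝ)
    (hCbar : ∀ (p : PatIdx M n) (j : Fin (n 0)), Cbar p j = Cmat W z (p.1 : ℕ) p.2 j)
    (dbar : PatIdx M n → ℝ)
    (hdbar : ∀ p : PatIdx M n, dbar p = dvec W b z (p.1 : ℕ) p.2) :
    P {ω | inducesPattern M W b (X ω) z} =
      ∑ k, ENNReal.ofReal (α k) *
        mvGaussian (Cbar *ᵥ μmix k + dbar) (Cbar * Smix k * Cbarᵀ)
          {v : PatIdx M n → ℝ |
            ∀ p : PatIdx M n, (if 0 < v p then (1 : ℝ) else 0) = z (p.1 : ℕ) p.2} := by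
  let O := orthant fun p : PatIdx M n => z (p.1 : ℕ) p.2
  have hO : MeasurableSet O := measurableSet_orthant _
  have haffine : Measurable (Cbar *ᵥ · + dbar) := by fun_prop
  have hpattern : {ω | inducesPattern M W b (X ω) z} = X ⁻¹' ((Cbar *ᵥ · + dbar) ⁻¹' O) :=
    Set.ext fun ω => inducesPattern_iff_mulVec_add_mem_orthant W b z M (X ω) Cbar hCbar dbar hdbar
  rw [hpattern, ← Measure.map_apply hX (haffine hO), hlaw]
  simp only [Measure.coe_finsetSum, Measure.coe_smul, Finset.sum_apply, Pi.smul_apply, smul_eq_mul]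
  refine Finset.sum_congr rfl fun k _ => ?_
  rw [← Measure.map_apply haffine hO, mvGaussian_map_mulVec_add _ (hSpd k).posSemidef]
  rfl

/-- Proposition 1: for a Gaussian-mixture input, the probability of an
activation pattern `ζ'` is the mixture of the Gaussian orthant probabilities
`N(C̄^{(L-1)} μ_k + d̄^{(L-1)}, C̄^{(L-1)} Σ_k C̄^{(L-1)ᵀ})(O(ζ'))`. -/
theorem statement8
    (n : ℕ → ℕ) (M : ℕ)  -- the network has `L = M + 1` layers
    (W : ∀ ℓ : ℕ, Matrix (Fin (n (ℓ + 1))) (Fin (n ℓ)) ℝ)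
    (b : ∀ ℓ : ℕ, Fin (n (ℓ + 1)) → ℝ)
    (z : ∀ ℓ : ℕ, Fin (n (ℓ + 1)) → ℝ)
    (hz : ∀ ℓ < M, ∀ i, z ℓ i = 0 ∨ z ℓ i = 1)  -- `ζ' ∈ {0,1}^N`
    (Kc : ℕ) (α : Fin Kc → ℝ) (hα : ∀ k, 0 < α k) (hαsum : ∑ k, α k = 1)
    (μmix : Fin Kc → Fin (n 0) → ℝ) (Smix : Fin Kc → Matrix (Fin (n 0)) (Fin (n 0)) ℝ)
    (hSpd : ∀ k, (Smix k).PosDef)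
    {Ω : Type*} [MeasurableSpace Ω] (P : Measure Ω) [IsProbabilityMeasure P]
    (X : Ω → Fin (n 0) → ℝ) (hX : Measurable X)
    -- the input has Gaussian-mixture law `μ = ∑ k, α k • N(μ_k, Σ_k)`
    (hlaw : P.map X = ∑ k, ENNReal.ofReal (α k) • mvGaussian (μmix k) (Smix k))
    -- the stacked matrix `C̄^{(L-1)}` and stacked vector `d̄^{(L-1)}`
    (Cbar : Matrix (PatIdx M n) (Fin (n 0)) ℝ)
    (hCbar : ∀ (p : PatIdx M n) (j : Fin (n 0)), Cbar p j = Cmat W z (p.1 : ℕ) p.2 j)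
    (dbar : PatIdx M n → ℝ)
    (hdbar : ∀ p : PatIdx M n, dbar p = dvec W b z (p.1 : ℕ) p.2)
    -- `Σ̃_{k,ζ'} = C̄ Σ_k C̄ᵀ` is invertible for all `k`
    (hinv : ∀ k, IsUnit (Cbar * Smix k * Cbarᵀ)) :
    P {ω | inducesPattern M W b (X ω) z} =
      ∑ k, ENNReal.ofReal (α k) *
        mvGaussian (Cbar *ᵥ μmix k + dbar) (Cbar * Smix k * Cbarᵀ)
          {v : PatIdx M n → ℝ |
            ∀ p : PatIdx M n, (if 0 < v p then (1 : ℝ) else 0) = z (p.1 : ℕ) p.2} :=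
  statement8_general n M W b z Kc α μmix Smix hSpd P X hX hlaw Cbar hCbar dbar hdbar

end ReluPaper
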